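/- For all complex numbers x, y and all natural numbers n, the sum over k from 0 to n of x^k * ((y^2 + 4) * F_k(y) + (x*y - 2) * L_{k+1}(y)) equals y * (x^(n+1) * L_{n+1}(y) - 2), where F_n(y) and L_n(y) are the Fibonacci and Lucas polynomials. -/
import Mathlib

open Finset

noncomputable def fibP (y : ℂ) : ℕ → ℂ
  | 0 => 0
  | 1 => 1
  | n + 2 => y * fibP y (n + 1) + fibP y n

noncomputable def lucasP (y : ℂ) : ℕ → ℂ
  | 0 => 2
  | 1 => y
  | n + 2 => y * lucasP y (n + 1) + lucasP y n

lemma key (y : ℂ) : ∀ n, (y ^ 2 + 4) * fibP y (n + 1) = lucasP y (n + 2) + lucasP y n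
  | 0 => by simp [fibP, lucasP]; ring
  | 1 => by simp [fibP, lucasP]; ring
  | n + 2 => by
    have h1 := key y n
    have h2 := key y (n + 1)
    show (y ^ 2 + 4) * fibP y (n + 3) = lucasP y (n + 4) + lucasP y (n + 2)
    have e1 : fibP y (n + 3) = y * fibP y (n + 2) + fibP y (n + 1) := rfl
    have e2 : lucasP y (n + 4) = y * lucasP y (n + 3) + lucasP y (n + 2) := rfl
    have e3 : lucasP y (n + 2) = y * lucasP y (n + 1) + lucasP y n := rfl
    rw [e1, e2]
    linear_combination y * h2 + h1 - e3

theorem stmt9 (x y : ℂ) (n : ℕ) :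
    ∑ k ∈ Finset.range (n + 1),
        x ^ k * ((y ^ 2 + 4) * fibP y k + (x * y - 2) * lucasP y (k + 1)) =
      y * (x ^ (n + 1) * lucasP y (n + 1) - 2) := by
  induction n with
  | zero => simp [fibP, lucasP]; ring
  | succ n ih =>
    rw [Finset.sum_range_succ, ih]
    have hk := key y n
    have e2 : lucasP y (n + 2) = y * lucasP y (n + 1) + lucasP y n := rfl
    linear_combination x ^ (n + 1) * hk - x ^ (n + 1) * e2
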